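/- Let z ∈ ℓ₂ with ‖z‖ = 1 and let g ∈ ℋ^∞(B_{ℓ₂},ℓ₂) be the constant function g ≡ z. Then the fiber 𝓕(g) consists exactly of the composition homomorphism C_g; that is, every Φ ∈ ℳ_{u,∞}(B_{ℓ₂},B_{ℓ₂}) with ξ(Φ) = g satisfies Φ(f)(x) = f̃(z) for all f ∈ 𝒜_u(B_{ℓ₂}) and all x ∈ B_{ℓ₂}. -/

import Mathlib

open Metric Set Filter

noncomputable section

/-- `ℓ2` is the complex Hilbert space of square-summable sequences indexed by `ℕ`. -/
abbrev ℓ2 : Type := lp (fun _ : ℕ => ℂ) 2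

/-- The open unit ball of `ℓ2`. -/
def oB : Set ℓ2 := Metric.ball 0 1

/-- The closed unit ball of `ℓ2`. -/
def cB : Set ℓ2 := Metric.closedBall 0 1

/-- The unit sphere of `ℓ2`. -/
def sph : Set ℓ2 := Metric.sphere 0 1

/-- The coordinate functional `x ↦ ⟨x, eₙ⟩ = xₙ` (inner ℂ product linear in the first variable). -/
def coord (n : ℕ) : ℓ2 → ℂ := fun x => x n

/-- Supremum norm on the open unit ball, for scalar-valued functions. -/
def supNorm (f : ℓ2 → ℂ) : ℝ := ⨆ x : oB, ‖f (x : ℓ2)‖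

/-- Supremum norm on the open unit ball, for `ℓ2`-valued functions. -/
def supNormV (g : ℓ2 → ℓ2) : ℝ := ⨆ x : oB, ‖g (x : ℓ2)‖

/-- Membership in `𝒜ᵤ(B)`: holomorphic on the open unit ball and uniformly continuous there. -/
def MemAu (f : ℓ2 → ℂ) : Prop :=
  DifferentiableOn ℂ f oB ∧ UniformContinuousOn f oB

/-- Membership in `ℋ^∞(B)`: holomorphic and bounded on the open unit ball. -/
def MemHinf (f : ℓ2 → ℂ) : Prop :=
  DifferentiableOn ℂ f oB ∧ ∃ C, ∀ x ∈ oB, ‖f x‖ ≤ C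

/-- Membership in `ℋ^∞(B,ℓ2)`: holomorphic and bounded on the open unit ball, `ℓ2`-valued. -/
def MemHinfV (g : ℓ2 → ℓ2) : Prop :=
  DifferentiableOn ℂ g oB ∧ ∃ C, ∀ x ∈ oB, ‖g x‖ ≤ C

/-- `fext` is (a representative of) the unique continuous extension `f̃` of `f` to the
closed unit ball. -/
def IsExt (f fext : ℓ2 → ℂ) : Prop :=
  ContinuousOn fext cB ∧ Set.EqOn fext f oB

/-- An element of the scalar-valued spectrum `ℳᵤ(B)`: a nonzero continuous `ℂ`-algebra
homomorphism `𝒜ᵤ(B) → ℂ`, encoded as a map on representatives. -/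
structure MuHom where
  toFun : (ℓ2 → ℂ) → ℂ
  map_add : ∀ f g, MemAu f → MemAu g → toFun (f + g) = toFun f + toFun g
  map_mul : ∀ f g, MemAu f → MemAu g → toFun (f * g) = toFun f * toFun g
  map_smul : ∀ (c : ℂ) (f), MemAu f → toFun (c • f) = c * toFun f
  respects : ∀ f g, MemAu f → MemAu g → Set.EqOn f g oB → toFun f = toFun g
  nonzero : ∃ f, MemAu f ∧ toFun f ≠ 0
  cont : ∃ C, ∀ f, MemAu f → ‖toFun f‖ ≤ C * supNorm f

/-- An element of the vector-valued spectrum `ℳ_{u,∞}(B,B)`: a nonzero continuous `ℂ`-algebra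
homomorphism `𝒜ᵤ(B) → ℋ^∞(B)`, encoded as a map on representatives. -/
structure MuInfHom where
  toFun : (ℓ2 → ℂ) → (ℓ2 → ℂ)
  maps_mem : ∀ f, MemAu f → MemHinf (toFun f)
  map_add : ∀ f g, MemAu f → MemAu g → ∀ x ∈ oB, toFun (f + g) x = toFun f x + toFun g x
  map_mul : ∀ f g, MemAu f → MemAu g → ∀ x ∈ oB, toFun (f * g) x = toFun f x * toFun g x
  map_smul : ∀ (c : ℂ) (f), MemAu f → ∀ x ∈ oB, toFun (c • f) x = c * toFun f x
  respects : ∀ f g, MemAu f → MemAu g → Set.EqOn f g oB → Set.EqOn (toFun f) (toFun g) oB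
  nonzero : ∃ f, MemAu f ∧ ∃ x ∈ oB, toFun f x ≠ 0
  cont : ∃ C, ∀ f, MemAu f → ∀ x ∈ oB, ‖toFun f x‖ ≤ C * supNorm f

/-- An element of the scalar-valued spectrum `ℳ_∞(B)`: a nonzero continuous `ℂ`-algebra
homomorphism `ℋ^∞(B) → ℂ`, encoded as a map on representatives. -/
structure MInfHom where
  toFun : (ℓ2 → ℂ) → ℂ
  map_add : ∀ f g, MemHinf f → MemHinf g → toFun (f + g) = toFun f + toFun g
  map_mul : ∀ f g, MemHinf f → MemHinf g → toFun (f * g) = toFun f * toFun g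
  map_smul : ∀ (c : ℂ) (f), MemHinf f → toFun (c • f) = c * toFun f
  respects : ∀ f g, MemHinf f → MemHinf g → Set.EqOn f g oB → toFun f = toFun g
  nonzero : ∃ f, MemHinf f ∧ toFun f ≠ 0
  cont : ∃ C, ∀ f, MemHinf f → ‖toFun f‖ ≤ C * supNorm f

/-- `ξ(Φ) = g`: the projection of `Φ` is the function `g`, i.e. `Φ(⟨·,eₙ⟩)(x) = g(x)ₙ`. -/
def xiEq (Φ : MuInfHom) (g : ℓ2 → ℓ2) : Prop :=
  ∀ x ∈ oB, ∀ n : ℕ, Φ.toFun (coord n) x = g x n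

/-- `Φ = C_g`: `Φ` is the composition homomorphism `f ↦ f̃ ∘ g`. -/
def IsCompHom (Φ : MuInfHom) (g : ℓ2 → ℓ2) : Prop :=
  ∀ f fext, MemAu f → IsExt f fext → ∀ x ∈ oB, Φ.toFun f x = fext (g x)

/-- The open unit ball of `ℋ^∞(B,ℓ2)`. -/
def ballHV : Set (ℓ2 → ℓ2) := {h | MemHinfV h ∧ supNormV h < 1}

/-- The open unit ball of `ℋ^∞(B)`. -/
def ballH : Set (ℓ2 → ℂ) := {h | MemHinf h ∧ supNorm h < 1}

/-- `F` is holomorphic on the open unit ball of `ℋ^∞(B,ℓ2)`: it is locally bounded there and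
`ℂ`-differentiable along every complex line (which, for maps on a ball of a Banach space, is
equivalent to Fréchet holomorphy). -/
def HolomorphicOnBallHV (F : (ℓ2 → ℓ2) → ℂ) : Prop :=
  (∀ h ∈ ballHV, ∃ ε > 0, ∃ C, ∀ k ∈ ballHV, supNormV (k - h) < ε → ‖F k‖ ≤ C) ∧
  (∀ h ∈ ballHV, ∀ k, MemHinfV k →
    DifferentiableOn ℂ (fun z : ℂ => F (h + z • k)) {z : ℂ | (h + z • k) ∈ ballHV})

/-- `F` is holomorphic on the open unit ball of `ℋ^∞(B)`: it is locally bounded there and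
`ℂ`-differentiable along every complex line. -/
def HolomorphicOnBallH (F : (ℓ2 → ℂ) → ℂ) : Prop :=
  (∀ h ∈ ballH, ∃ ε > 0, ∃ C, ∀ k ∈ ballH, supNorm (k - h) < ε → ‖F k‖ ≤ C) ∧
  (∀ h ∈ ballH, ∀ k, MemHinf k →
    DifferentiableOn ℂ (fun z : ℂ => F (h + z • k)) {z : ℂ | (h + z • k) ∈ ballH})

/-- `h ∈ 𝒞ℓ(f,g)` (with `fext = f̃` the continuous extension of `f` to the closed ball):
there is a net `(g_α)` in the open unit ball of `ℋ^∞(B,ℓ2)` converging weak-star to `g`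
(pointwise weak convergence of values) with `f̃(g_α(y)) → h(y)` for every `y ∈ B`. -/
def InCluster (fext : ℓ2 → ℂ) (g : ℓ2 → ℓ2) (h : ℓ2 → ℂ) : Prop :=
  ∃ (ι : Type) (l : Filter ι), l.NeBot ∧ ∃ gA : ι → ℓ2 → ℓ2,
    (∀ i, gA i ∈ ballHV) ∧
    (∀ y ∈ oB, ∀ u : ℓ2,
      Filter.Tendsto (fun i => (inner ℂ (gA i y) u : ℂ)) l (nhds (inner ℂ (g y) u))) ∧
    (∀ y ∈ oB, Filter.Tendsto (fun i => fext (gA i y)) l (nhds (h y)))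

-- helpers
lemma zero_mem_oB : (0 : ℓ2) ∈ oB := by simp [oB]

instance : Nonempty ↥oB := ⟨⟨0, zero_mem_oB⟩⟩

lemma norm_lt_one_of_mem {x : ℓ2} (hx : x ∈ oB) : ‖x‖ < 1 := by
  simpa [oB] using hx

lemma uc_on {f : ℓ2 → ℂ} (h : UniformContinuous f) : UniformContinuousOn f oB :=
  uniformContinuousOn_iff_restrict.mpr (h.comp uniformContinuous_subtype_val)

lemma memAu_const (c : ℂ) : MemAu (fun _ => c) :=
  ⟨differentiableOn_const c, uc_on uniformContinuous_const⟩

lemma memAu_inner (w : ℓ2) : MemAu (fun x => (inner ℂ w x : ℂ)) := by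
  constructor
  · exact (innerSL ℂ w).differentiable.differentiableOn
  · exact uc_on (innerSL ℂ w).uniformContinuous

lemma coord_eq_inner (n : ℕ) : coord n = fun x : ℓ2 => (inner ℂ (lp.single 2 n (1:ℂ)) x : ℂ) := by
  funext x
  rw [lp.inner_single_left]
  simp [coord, RCLike.inner_apply]

lemma memAu_coord (n : ℕ) : MemAu (coord n) := by
  rw [coord_eq_inner]; exact memAu_inner _

lemma memAu_add {f g : ℓ2 → ℂ} (hf : MemAu f) (hg : MemAu g) : MemAu (f + g) := by
  refine ⟨hf.1.add hg.1, ?_⟩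
  rw [Metric.uniformContinuousOn_iff]
  intro ε hε
  obtain ⟨δ1, hδ1, H1⟩ := Metric.uniformContinuousOn_iff.1 hf.2 (ε/2) (by linarith)
  obtain ⟨δ2, hδ2, H2⟩ := Metric.uniformContinuousOn_iff.1 hg.2 (ε/2) (by linarith)
  refine ⟨min δ1 δ2, by positivity, fun x hx y hy hxy => ?_⟩
  have e1 := H1 x hx y hy (lt_of_lt_of_le hxy (min_le_left _ _))
  have e2 := H2 x hx y hy (lt_of_lt_of_le hxy (min_le_right _ _))
  rw [dist_eq_norm] at *
  calc ‖(f + g) x - (f + g) y‖ = ‖(f x - f y) + (g x - g y)‖ := by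
        simp [Pi.add_apply]; ring_nf
    _ ≤ ‖f x - f y‖ + ‖g x - g y‖ := norm_add_le _ _
    _ < ε := by linarith

lemma memAu_smul (c : ℂ) {f : ℓ2 → ℂ} (hf : MemAu f) : MemAu (c • f) := by
  refine ⟨hf.1.const_smul c, ?_⟩
  rcases eq_or_ne c 0 with rfl | hc
  · simp only [zero_smul]
    exact uc_on uniformContinuous_const
  rw [Metric.uniformContinuousOn_iff]
  intro ε hε
  have hc' : (0:ℝ) < ‖c‖ := norm_pos_iff.mpr hc
  obtain ⟨δ, hδ, H⟩ := Metric.uniformContinuousOn_iff.1 hf.2 (ε/‖c‖) (div_pos hε hc')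
  refine ⟨δ, hδ, fun x hx y hy hxy => ?_⟩
  have := H x hx y hy hxy
  rw [dist_eq_norm] at *
  calc ‖(c • f) x - (c • f) y‖ = ‖c‖ * ‖f x - f y‖ := by
        simp only [Pi.smul_apply, smul_eq_mul, ← mul_sub, norm_mul]
    _ < ‖c‖ * (ε/‖c‖) := by exact mul_lt_mul_of_pos_left this hc'
    _ = ε := by rw [mul_comm, div_mul_cancel₀ ε (ne_of_gt hc')]

lemma memAu_bounded {f : ℓ2 → ℂ} (hf : MemAu f) : ∃ M : ℝ, 0 ≤ M ∧ ∀ x ∈ oB, ‖f x‖ ≤ M := by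
  obtain ⟨δ, hδ, H⟩ := Metric.uniformContinuousOn_iff.1 hf.2 1 one_pos
  obtain ⟨N, hN⟩ := exists_nat_gt (1/δ)
  have hN0 : 0 < (N:ℝ) := lt_trans (by positivity) hN
  refine ⟨‖f 0‖ + N, by positivity, fun x hx => ?_⟩
  have hx1 : ‖x‖ < 1 := norm_lt_one_of_mem hx
  have key : ∀ k : ℕ, k ≤ N → ‖f (((k:ℝ)/(N:ℝ)) • x)‖ ≤ ‖f 0‖ + k := by
    intro k hk
    induction k with
    | zero => simp
    | succ m ih =>
      have hm : m ≤ N := le_trans (Nat.le_succ m) hk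
      have hmem : ∀ j : ℕ, j ≤ N → (((j:ℝ)/(N:ℝ)) • x) ∈ oB := by
        intro j hj
        have : ‖((j:ℝ)/(N:ℝ)) • x‖ = ((j:ℝ)/(N:ℝ)) * ‖x‖ := by
          rw [norm_smul, Real.norm_eq_abs, abs_of_nonneg (by positivity)]
        have hj1 : (j:ℝ)/(N:ℝ) ≤ 1 := by
          rw [div_le_one hN0]; exact_mod_cast hj
        have : ‖((j:ℝ)/(N:ℝ)) • x‖ < 1 := by
          rw [this]
          calc ((j:ℝ)/(N:ℝ)) * ‖x‖ ≤ 1 * ‖x‖ :=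
                mul_le_mul_of_nonneg_right hj1 (norm_nonneg x)
            _ < 1 := by simpa using hx1
        simpa [oB] using this
      have hd : dist ((((m+1:ℕ):ℝ)/(N:ℝ)) • x) (((m:ℝ)/(N:ℝ)) • x) < δ := by
        rw [dist_eq_norm, ← sub_smul]
        have : (((m+1:ℕ):ℝ)/(N:ℝ)) - ((m:ℝ)/(N:ℝ)) = 1/(N:ℝ) := by
          push_cast; field_simp; ring
        rw [this, norm_smul, Real.norm_eq_abs, abs_of_nonneg (by positivity)]
        have h1 : 1/(N:ℝ) < δ := by
          rw [div_lt_iff₀ hN0]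
          rw [div_lt_iff₀ hδ] at hN
          linarith [hN]
        calc 1/(N:ℝ) * ‖x‖ ≤ 1/(N:ℝ) * 1 :=
              mul_le_mul_of_nonneg_left (le_of_lt hx1) (by positivity)
          _ < δ := by simpa using h1
      have := H _ (hmem (m+1) hk) _ (hmem m hm) hd
      rw [dist_eq_norm] at this
      have h2 : ‖f ((((m+1:ℕ):ℝ)/(N:ℝ)) • x)‖ ≤ ‖f (((m:ℝ)/(N:ℝ)) • x)‖ + 1 := by
        calc ‖f ((((m+1:ℕ):ℝ)/(N:ℝ)) • x)‖
            = ‖(f ((((m+1:ℕ):ℝ)/(N:ℝ)) • x) - f (((m:ℝ)/(N:ℝ)) • x)) +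
              f (((m:ℝ)/(N:ℝ)) • x)‖ := by rw [sub_add_cancel]
          _ ≤ ‖f ((((m+1:ℕ):ℝ)/(N:ℝ)) • x) - f (((m:ℝ)/(N:ℝ)) • x)‖ +
              ‖f (((m:ℝ)/(N:ℝ)) • x)‖ := norm_add_le _ _
          _ ≤ ‖f (((m:ℝ)/(N:ℝ)) • x)‖ + 1 := by linarith
      have := ih hm
      push_cast
      push_cast at h2
      linarith
  have hNN : ((N:ℝ)/(N:ℝ)) • x = x := by
    rw [div_self (ne_of_gt hN0), one_smul]
  have := key N le_rfl
  rw [hNN] at this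
  linarith

lemma supNorm_le {f : ℓ2 → ℂ} {M : ℝ} (h : ∀ x ∈ oB, ‖f x‖ ≤ M) : supNorm f ≤ M :=
  ciSup_le (fun x => h x x.2)

lemma supNorm_nonneg {f : ℓ2 → ℂ} (hf : MemAu f) : 0 ≤ supNorm f := by
  obtain ⟨M, hM0, hM⟩ := memAu_bounded hf
  have hb : BddAbove (Set.range fun x : oB => ‖f (x:ℓ2)‖) :=
    ⟨M, by rintro r ⟨x, rfl⟩; exact hM x x.2⟩
  exact le_trans (norm_nonneg (f 0)) (le_ciSup hb ⟨0, zero_mem_oB⟩)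

lemma memAu_mul {f g : ℓ2 → ℂ} (hf : MemAu f) (hg : MemAu g) : MemAu (f * g) := by
  refine ⟨hf.1.mul hg.1, ?_⟩
  obtain ⟨Mf, hMf0, hMf⟩ := memAu_bounded hf
  obtain ⟨Mg, hMg0, hMg⟩ := memAu_bounded hg
  set M : ℝ := max Mf Mg + 1 with hM
  have hM0 : 0 < M := by positivity
  rw [Metric.uniformContinuousOn_iff]
  intro ε hε
  obtain ⟨δ1, hδ1, H1⟩ := Metric.uniformContinuousOn_iff.1 hf.2 (ε/(2*M)) (by positivity)
  obtain ⟨δ2, hδ2, H2⟩ := Metric.uniformContinuousOn_iff.1 hg.2 (ε/(2*M)) (by positivity)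
  refine ⟨min δ1 δ2, by positivity, fun x hx y hy hxy => ?_⟩
  have e1 := H1 x hx y hy (lt_of_lt_of_le hxy (min_le_left _ _))
  have e2 := H2 x hx y hy (lt_of_lt_of_le hxy (min_le_right _ _))
  rw [dist_eq_norm] at *
  have hfx : ‖f x‖ ≤ Mf := hMf x hx
  have hgy : ‖g y‖ ≤ Mg := hMg y hy
  calc ‖(f * g) x - (f * g) y‖ = ‖f x * (g x - g y) + (f x - f y) * g y‖ := by
        simp only [Pi.mul_apply]; ring_nf
    _ ≤ ‖f x * (g x - g y)‖ + ‖(f x - f y) * g y‖ := norm_add_le _ _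
    _ = ‖f x‖ * ‖g x - g y‖ + ‖f x - f y‖ * ‖g y‖ := by rw [norm_mul, norm_mul]
    _ < ε := by
        have b1 : ‖f x‖ * ‖g x - g y‖ ≤ M * ‖g x - g y‖ :=
          mul_le_mul_of_nonneg_right (by rw [hM]; have := le_max_left Mf Mg; linarith) (norm_nonneg _)
        have b2 : ‖f x - f y‖ * ‖g y‖ ≤ ‖f x - f y‖ * M :=
          mul_le_mul_of_nonneg_left (by rw [hM]; have := le_max_right Mf Mg; linarith) (norm_nonneg _)
        have b3 : M * ‖g x - g y‖ < M * (ε/(2*M)) := mul_lt_mul_of_pos_left e2 hM0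
        have b4 : ‖f x - f y‖ * M < (ε/(2*M)) * M := mul_lt_mul_of_pos_right e1 hM0
        have : M * (ε/(2*M)) = ε/2 := by field_simp
        nlinarith

lemma norm_inner_le_one {z y : ℓ2} (hz : ‖z‖ = 1) (hy : ‖y‖ ≤ 1) :
    ‖(inner ℂ z y : ℂ)‖ ≤ 1 := by
  calc ‖(inner ℂ z y : ℂ)‖ ≤ ‖z‖ * ‖y‖ := norm_inner_le_norm z y
    _ ≤ 1 := by rw [hz, one_mul]; exact hy

lemma vbound1 {z y : ℓ2} (hz : ‖z‖ = 1) (hy : ‖y‖ ≤ 1) :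
    ‖(2⁻¹:ℂ) * (1 + (inner ℂ z y : ℂ))‖ ≤ 1 := by
  have hw : ‖(inner ℂ z y : ℂ)‖ ≤ 1 := norm_inner_le_one hz hy
  calc ‖(2⁻¹:ℂ) * (1 + (inner ℂ z y : ℂ))‖ = 2⁻¹ * ‖1 + (inner ℂ z y : ℂ)‖ := by
        rw [norm_mul]; norm_num
    _ ≤ 2⁻¹ * (‖(1:ℂ)‖ + ‖(inner ℂ z y : ℂ)‖) :=
        mul_le_mul_of_nonneg_left (norm_add_le _ _) (by norm_num)
    _ ≤ 1 := by rw [norm_one]; linarith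

lemma vbound2 {z y : ℓ2} (hz : ‖z‖ = 1) (hy : ‖y‖ < 1) {δ : ℝ} (hδ0 : 0 < δ)
    (hδ1 : δ ≤ 1) (hfar : δ ≤ ‖y - z‖) :
    ‖(2⁻¹:ℂ) * (1 + (inner ℂ z y : ℂ))‖ ≤ Real.sqrt (1 - δ^2/4) := by
  set w : ℂ := (inner ℂ z y : ℂ) with hw
  have e1 : ‖y - z‖ ^ 2 = ‖y‖ ^ 2 - 2 * RCLike.re (inner ℂ y z : ℂ) + ‖z‖ ^ 2 :=
    norm_sub_sq (𝕜 := ℂ) y z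
  have e2 : RCLike.re (inner ℂ y z : ℂ) = w.re := by
    rw [inner_re_symm]; simp [hw]
  have h1 : ‖y - z‖ ^ 2 = ‖y‖ ^ 2 - 2 * w.re + 1 := by
    rw [e1, e2, hz]; ring
  have hsq : δ^2 ≤ ‖y - z‖^2 := pow_le_pow_left₀ hδ0.le hfar 2
  have hwre : 2 * w.re ≤ 2 - δ^2 := by nlinarith [norm_nonneg y]
  have hwnorm : ‖w‖ ≤ 1 := norm_inner_le_one hz hy.le
  have hexp : ‖1 + w‖^2 = 1 + 2*w.re + (w.re^2 + w.im^2) := by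
    rw [Complex.sq_norm, Complex.normSq_apply]
    simp [Complex.add_re, Complex.add_im, Complex.one_re, Complex.one_im]
    ring
  have hw2 : ‖w‖^2 = w.re^2 + w.im^2 := by
    rw [Complex.sq_norm, Complex.normSq_apply]; ring
  have hfinal : ‖1 + w‖^2 ≤ 4 - δ^2 := by nlinarith [norm_nonneg w]
  have hnorm : ‖(2⁻¹:ℂ) * (1 + w)‖ = 2⁻¹ * ‖1 + w‖ := by rw [norm_mul]; norm_num
  rw [hnorm]
  apply Real.le_sqrt_of_sq_le
  nlinarith [norm_nonneg (1 + w)]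


set_option maxHeartbeats 2000000 in
/-- the fiber over a constant function of norm one consists only of the
composition homomorphism: `Φ(f)(x) = f̃(z)`. -/
theorem stmt2 (z : ℓ2) (hz : ‖z‖ = 1) (Φ : MuInfHom)
    (hΦ : xiEq Φ (fun _ => z)) :
    ∀ f fext, MemAu f → IsExt f fext → ∀ x ∈ oB, Φ.toFun f x = fext z := by
  intro f fext hf hext x hx
  obtain ⟨C0, hC0⟩ := Φ.cont
  set C : ℝ := max C0 0 with hCdef
  have hCnn : (0:ℝ) ≤ C := le_max_right _ _
  have hC : ∀ q, MemAu q → ‖Φ.toFun q x‖ ≤ C * supNorm q := fun q hq =>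
    le_trans (hC0 q hq x hx)
      (mul_le_mul_of_nonneg_right (le_max_left _ _) (supNorm_nonneg hq))
  set c1 : ℓ2 → ℂ := fun _ => 1 with hc1
  -- ψ(1) = 1
  have hpsi1 : Φ.toFun c1 x = 1 := by
    have hmul := Φ.map_mul c1 c1 (memAu_const 1) (memAu_const 1) x hx
    have hcc : c1 * c1 = c1 := by funext y; simp [hc1]
    rw [hcc] at hmul
    have h01 : Φ.toFun c1 x * (Φ.toFun c1 x - 1) = 0 := by linear_combination -hmul
    rcases mul_eq_zero.1 h01 with h0 | h1
    · exfalso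
      have hzne : z ≠ 0 := by intro h; rw [h] at hz; simp at hz
      have : ∃ n, z n ≠ 0 := by
        by_contra hcon
        push_neg at hcon
        exact hzne (lp.ext (funext fun n => by simpa using hcon n))
      obtain ⟨n, hn⟩ := this
      have hcn := Φ.map_mul (coord n) c1 (memAu_coord n) (memAu_const 1) x hx
      have : coord n * c1 = coord n := by funext y; simp [hc1]
      rw [this, h0, mul_zero] at hcn
      have := hΦ x hx n
      simp only at this
      exact hn (by rw [← this, hcn])
    · exact sub_eq_zero.1 h1
  have hpsi1' : Φ.toFun c1 x = 1 := hpsi1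
  -- ψ(const a) = a
  have hconst : ∀ a : ℂ, Φ.toFun (fun _ => a) x = a := by
    intro a
    have he : (fun _ : ℓ2 => a) = a • c1 := by funext y; simp [hc1]
    rw [he, Φ.map_smul a c1 (memAu_const 1) x hx, hpsi1, mul_one]
  -- ψ(u) = 1
  set u : ℓ2 → ℂ := fun y => (inner ℂ z y : ℂ) with hu
  have hpsiu : Φ.toFun u x = 1 := by
    set wN : ℕ → ℓ2 := fun N => ∑ n ∈ Finset.range N, lp.single 2 n (z n) with hwN
    set S : ℕ → ℂ := fun N => ∑ n ∈ Finset.range N, (inner ℂ (z n) (z n) : ℂ) with hS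
    have claim1 : ∀ N, Φ.toFun (fun y => (inner ℂ (wN N) y : ℂ)) x = S N := by
      intro N
      induction N with
      | zero =>
        have : (fun y : ℓ2 => (inner ℂ (wN 0) y : ℂ)) = fun _ => (0:ℂ) := by
          funext y; simp [hwN]
        rw [this, hconst]; simp [hS]
      | succ N ih =>
        have hsplit : (fun y : ℓ2 => (inner ℂ (wN (N+1)) y : ℂ)) =
            (fun y => (inner ℂ (wN N) y : ℂ)) +
            ((starRingEnd ℂ) (z N) • coord N) := by
          funext y
          simp only [hwN, Finset.sum_range_succ, sum_inner, inner_add_left, Pi.add_apply,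
            Pi.smul_apply, smul_eq_mul]
          rw [lp.inner_single_left]
          simp [coord, RCLike.inner_apply]; ring
        rw [hsplit, Φ.map_add _ _ (memAu_inner (wN N))
          (memAu_smul _ (memAu_coord N)) x hx, ih,
          Φ.map_smul _ _ (memAu_coord N) x hx]
        have hcoordN : Φ.toFun (coord N) x = z N := by
          have := hΦ x hx N; simpa using this
        rw [hcoordN]
        simp [hS, Finset.sum_range_succ, RCLike.inner_apply]; exact Complex.conj_mul' _
    have claim2 : Tendsto S atTop (nhds 1) := by
      have h := (lp.hasSum_inner (𝕜 := ℂ) z z).tendsto_sum_nat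
      have : (inner ℂ z z : ℂ) = 1 := by
        rw [inner_self_eq_norm_sq_to_K, hz]; norm_num
      rw [this] at h
      exact h
    have claim3 : Tendsto (fun N => ‖z - wN N‖) atTop (nhds 0) := by
      have h := (lp.hasSum_single ENNReal.ofNat_ne_top z).tendsto_sum_nat
      have h2 : Tendsto (fun N => wN N - z) atTop (nhds 0) := by
        simpa using h.sub (tendsto_const_nhds (x := z))
      have h3 := h2.norm
      simp only [norm_zero] at h3
      refine h3.congr fun N => ?_
      rw [norm_sub_rev]
    have claim4 : ∀ N, Φ.toFun u x - S N =
        Φ.toFun (fun y => (inner ℂ (z - wN N) y : ℂ)) x := by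
      intro N
      have hsplit : u = (fun y => (inner ℂ (wN N) y : ℂ)) +
          (fun y => (inner ℂ (z - wN N) y : ℂ)) := by
        funext y
        simp only [hu, Pi.add_apply, ← inner_add_left]
        rw [add_sub_cancel]
      rw [hsplit, Φ.map_add _ _ (memAu_inner (wN N)) (memAu_inner (z - wN N)) x hx,
        claim1]
      ring
    have claim5 : ∀ N, ‖Φ.toFun u x - S N‖ ≤ C * ‖z - wN N‖ := by
      intro N
      rw [claim4 N]
      refine le_trans (hC _ (memAu_inner (z - wN N))) ?_
      refine mul_le_mul_of_nonneg_left (supNorm_le fun y hy => ?_) hCnn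
      calc ‖(inner ℂ (z - wN N) y : ℂ)‖ ≤ ‖z - wN N‖ * ‖y‖ := norm_inner_le_norm _ _
        _ ≤ ‖z - wN N‖ * 1 :=
            mul_le_mul_of_nonneg_left (norm_lt_one_of_mem hy).le (norm_nonneg _)
        _ = ‖z - wN N‖ := mul_one _
    have hdiff : Tendsto (fun N => Φ.toFun u x - S N) atTop (nhds 0) := by
      apply squeeze_zero_norm claim5
      simpa using claim3.const_mul C
    have hS' : Tendsto S atTop (nhds (Φ.toFun u x)) := by
      have := (tendsto_const_nhds (x := Φ.toFun u x) (f := atTop)).sub hdiff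
      simpa using this
    exact (tendsto_nhds_unique hS' claim2)
  -- v and its powers
  set v : ℓ2 → ℂ := fun y => (2⁻¹:ℂ) * (1 + (inner ℂ z y : ℂ)) with hv
  have hveq : v = (2⁻¹:ℂ) • (c1 + u) := by
    funext y; simp [hv, hc1, hu, Pi.smul_apply, Pi.add_apply]
  have hvAu : MemAu v := by
    rw [hveq]; exact memAu_smul _ (memAu_add (memAu_const 1) (memAu_inner z))
  have hpsiv : Φ.toFun v x = 1 := by
    rw [hveq, Φ.map_smul _ _ (memAu_add (memAu_const 1) (memAu_inner z)) x hx,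
      Φ.map_add c1 u (memAu_const 1) (memAu_inner z) x hx, hpsi1, hpsiu]
    norm_num
  have hvpow_succ : ∀ m : ℕ, (fun y => (v y)^(m+1)) = (fun y => (v y)^m) * v := by
    intro m; funext y; simp [pow_succ]
  have hvpowAu : ∀ m : ℕ, MemAu (fun y => (v y)^m) := by
    intro m
    induction m with
    | zero => simpa using memAu_const 1
    | succ m ih => rw [hvpow_succ]; exact memAu_mul ih hvAu
  have hpsivpow : ∀ m : ℕ, Φ.toFun (fun y => (v y)^m) x = 1 := by
    intro m
    induction m with
    | zero =>
      have : (fun y : ℓ2 => (v y)^0) = fun _ => (1:ℂ) := by funext y; simp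
      rw [this, hconst]
    | succ m ih =>
      rw [hvpow_succ, Φ.map_mul _ _ (hvpowAu m) hvAu x hx, ih, hpsiv, mul_one]
  -- q = f - c
  set c : ℂ := fext z with hcdef
  set q : ℓ2 → ℂ := fun y => f y - c with hq
  have hqeq : q = f + (fun _ => -c) := by funext y; simp [hq, sub_eq_add_neg]
  have hqAu : MemAu q := by rw [hqeq]; exact memAu_add hf (memAu_const _)
  have hpsiq : Φ.toFun q x = Φ.toFun f x - c := by
    rw [hqeq, Φ.map_add f _ hf (memAu_const _) x hx, hconst]
    ring
  obtain ⟨Mf, hMf0, hMf⟩ := memAu_bounded hf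
  set M : ℝ := Mf + ‖c‖ with hM
  have hM0 : 0 ≤ M := by positivity
  have hqbound : ∀ y ∈ oB, ‖q y‖ ≤ M := by
    intro y hy
    calc ‖q y‖ = ‖f y - c‖ := rfl
      _ ≤ ‖f y‖ + ‖c‖ := norm_sub_le _ _
      _ ≤ M := by have := hMf y hy; rw [hM]; linarith
  have hz_cB : z ∈ cB := by
    simp only [cB, Metric.mem_closedBall, dist_zero_right, hz, le_refl]
  -- key estimate
  have key : ∀ ε > 0, ‖Φ.toFun f x - c‖ ≤ C * ε := by
    intro ε hε
    have hcont := hext.1 z hz_cB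
    rw [Metric.continuousWithinAt_iff] at hcont
    obtain ⟨δ1, hδ10, hδ1⟩ := hcont ε hε
    set δ : ℝ := min δ1 1 with hδdef
    have hδ0 : 0 < δ := lt_min hδ10 one_pos
    have hδle1 : δ ≤ 1 := min_le_right _ _
    set r : ℝ := Real.sqrt (1 - δ^2/4) with hr
    have hr0 : 0 ≤ r := Real.sqrt_nonneg _
    have hr1 : r < 1 := by
      rw [hr]
      calc Real.sqrt (1 - δ^2/4) < Real.sqrt 1 := by
            apply Real.sqrt_lt_sqrt
            · nlinarith [sq_nonneg δ, hδ0, hδle1]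
            · nlinarith [hδ0, hδle1, sq_nonneg δ, mul_pos hδ0 hδ0]
        _ = 1 := Real.sqrt_one
    have hbound : ∀ m : ℕ, ∀ y ∈ oB, ‖q y * (v y)^m‖ ≤ max ε (M * r^m) := by
      intro m y hy
      have hy1 : ‖y‖ < 1 := norm_lt_one_of_mem hy
      by_cases hnear : ‖y - z‖ < δ
      · have hyc : y ∈ cB := Metric.ball_subset_closedBall hy
        have hd : dist y z < δ1 := by
          rw [dist_eq_norm]; exact lt_of_lt_of_le hnear (min_le_left _ _)
        have := hδ1 hyc hd
        rw [dist_eq_norm, hext.2 hy] at this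
        have hqy : ‖q y‖ ≤ ε := le_of_lt this
        have hvy : ‖v y‖ ≤ 1 := vbound1 hz hy1.le
        calc ‖q y * (v y)^m‖ = ‖q y‖ * ‖v y‖^m := by rw [norm_mul, norm_pow]
          _ ≤ ε * 1 := mul_le_mul hqy (pow_le_one₀ (norm_nonneg _) hvy)
              (by positivity) hε.le
          _ = ε := mul_one _
          _ ≤ max ε (M * r^m) := le_max_left _ _
      · have hvy : ‖v y‖ ≤ r := vbound2 hz hy1 hδ0 hδle1 (not_lt.1 hnear)
        calc ‖q y * (v y)^m‖ = ‖q y‖ * ‖v y‖^m := by rw [norm_mul, norm_pow]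
          _ ≤ M * r^m := mul_le_mul (hqbound y hy)
              (pow_le_pow_left₀ (norm_nonneg _) hvy m) (by positivity) hM0
          _ ≤ max ε (M * r^m) := le_max_right _ _
    have htend : Tendsto (fun m : ℕ => M * r^m) atTop (nhds 0) := by
      simpa using (tendsto_pow_atTop_nhds_zero_of_lt_one hr0 hr1).const_mul M
    obtain ⟨m, hm⟩ : ∃ m : ℕ, M * r^m ≤ ε := by
      obtain ⟨Nn, hNn⟩ := Metric.tendsto_atTop.1 htend ε hε
      have := hNn Nn le_rfl
      rw [Real.dist_eq, sub_zero] at this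
      exact ⟨Nn, (le_abs_self _).trans this.le⟩
    have hFAu : MemAu (q * fun y => (v y)^m) := memAu_mul hqAu (hvpowAu m)
    have hsup : supNorm (q * fun y => (v y)^m) ≤ ε := by
      apply supNorm_le
      intro y hy
      have := hbound m y hy
      simp only [Pi.mul_apply]
      exact le_trans this (max_le le_rfl hm)
    have hψF : Φ.toFun (q * fun y => (v y)^m) x = Φ.toFun f x - c := by
      rw [Φ.map_mul q _ hqAu (hvpowAu m) x hx, hpsivpow m, mul_one, hpsiq]
    calc ‖Φ.toFun f x - c‖ = ‖Φ.toFun (q * fun y => (v y)^m) x‖ := by rw [hψF]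
      _ ≤ C * supNorm (q * fun y => (v y)^m) := hC _ hFAu
      _ ≤ C * ε := mul_le_mul_of_nonneg_left hsup hCnn
  -- conclude
  have hzero : ‖Φ.toFun f x - c‖ ≤ 0 := by
    apply le_of_forall_pos_le_add
    intro ε hε
    have htpos : (0:ℝ) < ε/(C+1) := by positivity
    have hk := key (ε/(C+1)) htpos
    have heq : C*(ε/(C+1)) + ε/(C+1) = ε := by field_simp
    linarith
  exact sub_eq_zero.1 (norm_le_zero_iff.1 hzero)
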